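/- arXiv:2301.01801 — 8 statements merged into one kernel-verified Lean document; each statement's English description precedes it below -/
import Mathlib

section
/- Suppose that for all α∈𝓐 and all x with δ/2 < x_r < 2b for every r, each U_r(·;α_r) is concave and each B_l is μ-strongly convex. Then for every α∈𝓐 the function x ↦ Φ(x;α) is μ_Φ-strongly concave on 𝓧 = {x∈ℝⁿ : δ/2 < x_r < 2b ∀r}, where μ_Φ = (ε + μ·M_min)/2 and M_min = min_{r=1,…,n} (number of links that lie on user r's route 𝓛_r and on no other user's route). -/
open Finset

/-!
Write `Φ = Σ_r U_r(x_r) - (ε/2)‖x‖² - Σ_l B_l(load_l x)`, where `load_l x` is the total rate of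
the users crossing link `l`. The first term is concave and the second `ε`-strongly concave.
Strong convexity of each `B_l` makes `Σ_l B_l ∘ load_l` strongly convex with modulus `μ M`
as soon as `M ‖d‖² ≤ Σ_l (load_l d)²` for every direction `d`; taking `M = M_min` this holds
because a link used by user `r` alone has load `d_r`, and these exclusive links are disjoint.
Hence `Φ` is even `(ε + μ M_min)`-strongly concave.
-/

section Convexity

variable {E : Type*} [NormedAddCommGroup E] [NormedSpace ℝ E]

lemma ConcaveOn.finset_sum {ι : Type*} {s : Set E} {t : Finset ι} {f : ι → E → ℝ}
    (hs : Convex ℝ s) (hf : ∀ i ∈ t, ConcaveOn ℝ s (f i)) :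
    ConcaveOn ℝ s (fun x => ∑ i ∈ t, f i x) := by
  refine ⟨hs, fun x hx y hy a b ha hb hab => ?_⟩
  simp only [smul_eq_mul, mul_sum, ← sum_add_distrib]
  exact sum_le_sum fun i hi => by simpa only [smul_eq_mul] using (hf i hi).2 hx hy ha hb hab

lemma convex_setOf_forall_apply_mem {ι : Type*} [Fintype ι] {I : Set ℝ} (hI : Convex ℝ I) :
    Convex ℝ {x : EuclideanSpace ℝ ι | ∀ r, x r ∈ I} := by
  intro x hx y hy a b ha hb hab r
  simpa using hI (hx r) (hy r) ha hb hab

lemma concaveOn_sum_apply {ι : Type*} [Fintype ι] {I : Set ℝ} {g : ι → ℝ → ℝ}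
    (hI : Convex ℝ I) (hg : ∀ r, ConcaveOn ℝ I (g r)) :
    ConcaveOn ℝ {x : EuclideanSpace ℝ ι | ∀ r, x r ∈ I} (fun x => ∑ r, g r (x r)) :=
  ConcaveOn.finset_sum (convex_setOf_forall_apply_mem hI) fun r _ =>
    ((hg r).comp_linearMap (EuclideanSpace.projₗ r)).subset (fun _ hx => hx r)
      (convex_setOf_forall_apply_mem hI)

lemma strongConcaveOn_neg_mul_norm_sq {F : Type*} [NormedAddCommGroup F] [InnerProductSpace ℝ F]
    {s : Set F} (hs : Convex ℝ s) (m : ℝ) :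
    StrongConcaveOn s m (fun x => -(m / 2 * ‖x‖ ^ 2)) :=
  strongConcaveOn_iff_convex.2 (by simpa using concaveOn_const (0 : ℝ) hs)

lemma strongConvexOn_sum_comp_linearMap {κ : Type*} [Fintype κ] {s : Set E} (hs : Convex ℝ s)
    {f : κ → ℝ → ℝ} {L : κ → E →ₗ[ℝ] ℝ} {μ M : ℝ} (hμ : 0 ≤ μ)
    (hf : ∀ l, StrongConvexOn Set.univ μ (f l)) (hL : ∀ x, M * ‖x‖ ^ 2 ≤ ∑ l, L l x ^ 2) :
    StrongConvexOn s (μ * M) (fun x => ∑ l, f l (L l x)) := by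
  refine ⟨hs, fun x _ y _ a b ha hb hab => ?_⟩
  have hterm : ∀ l, f l (L l (a • x + b • y)) ≤
      a * f l (L l x) + b * f l (L l y) - a * b * (μ / 2) * L l (x - y) ^ 2 := fun l => by
    simpa [Real.norm_eq_abs, sq_abs, mul_assoc] using
      (hf l).2 (Set.mem_univ (L l x)) (Set.mem_univ (L l y)) ha hb hab
  have hsum := sum_le_sum fun l (_ : l ∈ univ) => hterm l
  rw [sum_sub_distrib, sum_add_distrib, ← mul_sum, ← mul_sum, ← mul_sum] at hsum
  have hab0 : 0 ≤ a * b * (μ / 2) := by positivity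
  simp only [smul_eq_mul]
  nlinarith [mul_le_mul_of_nonneg_left (hL (x - y)) hab0]

end Convexity

section Routes

variable {ι κ : Type*} [Fintype ι] [DecidableEq κ] (route : ι → Finset κ)

noncomputable def linkLoad (l : κ) : EuclideanSpace ℝ ι →ₗ[ℝ] ℝ :=
  ∑ r ∈ univ.filter (fun r => l ∈ route r), EuclideanSpace.projₗ r

lemma linkLoad_apply (l : κ) (x : EuclideanSpace ℝ ι) :
    linkLoad route l x = ∑ r ∈ univ.filter (fun r => l ∈ route r), x r := by
  simp [linkLoad]

variable [DecidableEq ι]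

def exclusiveLinks (r : ι) : Finset κ :=
  (route r).filter (fun l => ∀ r', r' ≠ r → l ∉ route r')

variable {route}

lemma filter_mem_route_eq_singleton {r : ι} {l : κ} (hl : l ∈ exclusiveLinks route r) :
    univ.filter (fun r' => l ∈ route r') = {r} := by
  rw [exclusiveLinks, mem_filter] at hl
  ext r'
  simp only [mem_filter, mem_univ, true_and, mem_singleton]
  exact ⟨fun h => by_contra fun hne => hl.2 r' hne h, by rintro rfl; exact hl.1⟩

lemma pairwiseDisjoint_exclusiveLinks :
    ((univ : Finset ι) : Set ι).PairwiseDisjoint (exclusiveLinks route) := by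
  intro r _ r' _ hrr'
  refine disjoint_left.2 fun l hl hl' => ?_
  rw [exclusiveLinks, mem_filter] at hl hl'
  exact hl'.2 r hrr' hl.1

variable [Fintype κ] (route)

lemma sum_card_exclusiveLinks_mul_sq_le (d : EuclideanSpace ℝ ι) :
    ∑ r, ((exclusiveLinks route r).card : ℝ) * d r ^ 2 ≤ ∑ l, linkLoad route l d ^ 2 :=
  calc ∑ r, ((exclusiveLinks route r).card : ℝ) * d r ^ 2
      = ∑ r, ∑ l ∈ exclusiveLinks route r, linkLoad route l d ^ 2 := by
        refine sum_congr rfl fun r _ => ?_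
        rw [sum_congr rfl fun l hl => by
          rw [linkLoad_apply, filter_mem_route_eq_singleton hl, sum_singleton]]
        simp
    _ = ∑ l ∈ univ.biUnion (exclusiveLinks route), linkLoad route l d ^ 2 :=
        (sum_biUnion pairwiseDisjoint_exclusiveLinks).symm
    _ ≤ ∑ l, linkLoad route l d ^ 2 :=
        sum_le_sum_of_subset_of_nonneg (subset_univ _) fun _ _ _ => sq_nonneg _

lemma iInf_card_exclusiveLinks_mul_norm_sq_le (d : EuclideanSpace ℝ ι) :
    (⨅ r, ((exclusiveLinks route r).card : ℝ)) * ‖d‖ ^ 2 ≤ ∑ l, linkLoad route l d ^ 2 := by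
  rw [EuclideanSpace.real_norm_sq_eq, mul_sum]
  refine le_trans (sum_le_sum fun r _ => ?_) (sum_card_exclusiveLinks_mul_sq_le route d)
  exact mul_le_mul_of_nonneg_right (ciInf_le (Set.finite_range _).bddBelow r) (sq_nonneg _)

end Routes

theorem stmt1_general (n m : ℕ) (route : Fin n → Finset (Fin m))
    (U : Fin n → ℝ → ℝ → ℝ) (B : Fin m → ℝ → ℝ)
    (ε μ δ b : ℝ) (hε : 0 < ε) (hμ : 0 < μ)
    (A : Set (EuclideanSpace ℝ (Fin n)))
    (hUconc : ∀ α ∈ A, ∀ r, ConcaveOn ℝ (Set.Ioo (δ / 2) (2 * b)) (fun x => U r x (α r)))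
    (hBsc : ∀ l, StrongConvexOn Set.univ μ (B l))
    (Mmin : ℝ)
    (hMmin : Mmin = ⨅ r : Fin n,
      (((route r).filter (fun l => ∀ r', r' ≠ r → l ∉ route r')).card : ℝ))
    (α : EuclideanSpace ℝ (Fin n)) (hα : α ∈ A) :
    StrongConcaveOn {x : EuclideanSpace ℝ (Fin n) | ∀ r, x r ∈ Set.Ioo (δ / 2) (2 * b)}
      ((ε + μ * Mmin) / 2)
      (fun x : EuclideanSpace ℝ (Fin n) =>
        (∑ r, (U r (x r) (α r) - ε * (x r) ^ 2 / 2)) -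
          ∑ l, B l (∑ r ∈ univ.filter (fun r => l ∈ route r), x r)) := by
  have hM : Mmin = ⨅ r, ((exclusiveLinks route r).card : ℝ) := by
    rw [hMmin]
    unfold exclusiveLinks
    congr!
  have hM0 : 0 ≤ Mmin := hM ▸ Real.iInf_nonneg fun r => Nat.cast_nonneg _
  have hs := convex_setOf_forall_apply_mem (ι := Fin n) (convex_Ioo (δ / 2) (2 * b))
  have hutility := concaveOn_sum_apply (convex_Ioo _ _) (hUconc α hα)
  have hload := strongConvexOn_sum_comp_linearMap (f := B) (M := Mmin) hs hμ.le hBsc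
    (hM ▸ iInf_card_exclusiveLinks_mul_norm_sq_le route)
  have hΦ := (hutility.uniformConcaveOn_zero.add (strongConcaveOn_neg_mul_norm_sq hs ε)).sub hload
  refine StrongConcaveOn.mono (n := ε + μ * Mmin) (by nlinarith [mul_nonneg hμ.le hM0]) ?_
  unfold StrongConcaveOn
  convert hΦ using 2
  · simp only [Pi.add_apply, Pi.zero_apply]
    ring
  · simp only [Pi.add_apply, Pi.sub_apply, linkLoad_apply, EuclideanSpace.real_norm_sq_eq,
      sum_sub_distrib, mul_sum, mul_div_right_comm ε]
    ring

/-- **Proposition 2.** If each surrogate utility `U_r(·;α_r)` is concave and each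
link cost `B_l` is `μ`-strongly convex (on the relevant region), then for every `α ∈ 𝓐` the
lower-level objective `Φ(·;α)` is `μ_Φ`-strongly concave on
`𝓧 = {x : δ/2 < x_r < 2b ∀r}`, where `μ_Φ = (ε + μ·M_min)/2` and `M_min` is the minimum over
users `r` of the number of links on route `𝓛_r` belonging to no other user's route. -/
theorem stmt1 (n m : ℕ) (route : Fin n → Finset (Fin m))
    (U : Fin n → ℝ → ℝ → ℝ) (B : Fin m → ℝ → ℝ)
    (ε μ δ b : ℝ) (hε : 0 < ε) (hμ : 0 < μ) (hδ : 0 < δ) (hδb : δ < b)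
    (A : Set (EuclideanSpace ℝ (Fin n)))
    (hUconc : ∀ α ∈ A, ∀ r, ConcaveOn ℝ (Set.Ioo (δ / 2) (2 * b)) (fun x => U r x (α r)))
    (hBsc : ∀ l, StrongConvexOn Set.univ μ (B l))
    (Mmin : ℝ)
    (hMmin : Mmin = ⨅ r : Fin n,
      (((route r).filter (fun l => ∀ r', r' ≠ r → l ∉ route r')).card : ℝ))
    (α : EuclideanSpace ℝ (Fin n)) (hα : α ∈ A) :
    StrongConcaveOn {x : EuclideanSpace ℝ (Fin n) | ∀ r, x r ∈ Set.Ioo (δ / 2) (2 * b)}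
      ((ε + μ * Mmin) / 2)
      (fun x : EuclideanSpace ℝ (Fin n) =>
        (∑ r, (U r (x r) (α r) - ε * (x r) ^ 2 / 2)) -
          ∑ l, B l (∑ r ∈ univ.filter (fun r => l ∈ route r), x r)) :=
  stmt1_general n m route U B ε μ δ b hε hμ A hUconc hBsc Mmin hMmin α hα
end

section
/- Under Assumption 2, for every x ∈ 𝓧, all α, α′ ∈ 𝓐, and every vector u = (u_1,…,u_n) ∈ ℝⁿ, one has ‖∇²_x Φ(x;α)u − ∇²_x Φ(x;α′)u‖ ≤ L_u·(max_i |u_i|)·‖α − α′‖. -/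
noncomputable section

open Finset

/-- `∇_x U`: partial derivative of a surrogate utility in the rate variable. -/
def dU (U : ℝ → ℝ → ℝ) (x a : ℝ) : ℝ := deriv (fun t => U t a) x

/-- `∇²_x U`: second partial derivative in the rate variable. -/
def d2U (U : ℝ → ℝ → ℝ) (x a : ℝ) : ℝ := deriv (fun t => dU U t a) x

/-- `∇_α ∇_x U`: mixed second partial derivative. -/
def dadU (U : ℝ → ℝ → ℝ) (x a : ℝ) : ℝ := deriv (fun s => dU U x s) a

/-- The load of link `l`: `∑_{r : l ∈ 𝓛_r} x_r`. -/
def load {n m : ℕ} (route : Fin n → Finset (Fin m)) (x : Fin n → ℝ) (l : Fin m) : ℝ :=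
  ∑ r ∈ univ.filter (fun r => l ∈ route r), x r

/-- The Hessian `∇²_x Φ(x;α)` of the lower-level objective: its `(i,j)` entry is
`∇²_x U_i(x_i;α_i) − ε − ∑_{l∈𝓛_i} ∇²B_l(load_l)` for `i = j` and
`−∑_{l∈𝓛_i∩𝓛_j} ∇²B_l(load_l)` for `i ≠ j`. -/
def hessPhi {n m : ℕ} (U : Fin n → ℝ → ℝ → ℝ) (B : Fin m → ℝ → ℝ) (ε : ℝ)
    (route : Fin n → Finset (Fin m)) (x a : Fin n → ℝ) : Matrix (Fin n) (Fin n) ℝ :=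
  Matrix.of fun i j =>
    if i = j then
      d2U (U i) (x i) (a i) - ε - ∑ l ∈ route i, deriv (deriv (B l)) (load route x l)
    else
      -∑ l ∈ route i ∩ route j, deriv (deriv (B l)) (load route x l)

/-- The Euclidean norm on `Fin n → ℝ`. -/
def euclNorm {n : ℕ} (v : Fin n → ℝ) : ℝ := Real.sqrt (∑ i, (v i) ^ 2)

/-!
Only the diagonal terms `∇²_x U_r(x_r; α_r)` of the Hessian depend on `α`, so the difference of
the two Hessians is diagonal with entries bounded by `L_u |α_r − α'_r|`; applying it to `u` scales
each entry by at most `max_i |u_i|`.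
-/

theorem hessPhi_sub_hessPhi {n m : ℕ} (U : Fin n → ℝ → ℝ → ℝ) (B : Fin m → ℝ → ℝ) (ε : ℝ)
    (route : Fin n → Finset (Fin m)) (x a a' : Fin n → ℝ) :
    hessPhi U B ε route x a - hessPhi U B ε route x a' =
      Matrix.diagonal fun i => d2U (U i) (x i) (a i) - d2U (U i) (x i) (a' i) := by
  ext i j
  rcases eq_or_ne i j with rfl | hij
  · simp [hessPhi]
  · simp [hessPhi, hij]

theorem euclNorm_le_mul_of_abs_le {n : ℕ} {v w : Fin n → ℝ} {c : ℝ} (hc : 0 ≤ c)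
    (h : ∀ i, |v i| ≤ c * |w i|) : euclNorm v ≤ c * euclNorm w := by
  have hsq : ∑ i, v i ^ 2 ≤ c ^ 2 * ∑ i, w i ^ 2 := by
    rw [Finset.mul_sum]
    gcongr with i
    calc v i ^ 2 = |v i| ^ 2 := (sq_abs _).symm
      _ ≤ (c * |w i|) ^ 2 := by gcongr; exact h i
      _ = c ^ 2 * w i ^ 2 := by rw [mul_pow, sq_abs]
  calc euclNorm v ≤ Real.sqrt (c ^ 2 * ∑ i, w i ^ 2) := Real.sqrt_le_sqrt hsq
    _ = c * euclNorm w := by rw [Real.sqrt_mul (sq_nonneg c), Real.sqrt_sq hc, euclNorm]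

theorem stmt4_general (n m : ℕ) (route : Fin n → Finset (Fin m))
    (U : Fin n → ℝ → ℝ → ℝ) (B : Fin m → ℝ → ℝ)
    (ε δ b Lu : ℝ)
    (hLu : 0 ≤ Lu)
    -- Assumption 2
    (hUxx_lipa : ∀ r, ∀ x ∈ Set.Ioo (δ / 2) (2 * b), ∀ a a' : ℝ,
      |d2U (U r) x a - d2U (U r) x a'| ≤ Lu * |a - a'|)
    -- the points
    (x : Fin n → ℝ) (hx : ∀ r, x r ∈ Set.Ioo (δ / 2) (2 * b))
    (α α' : Fin n → ℝ)
    (u : Fin n → ℝ) :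
    euclNorm ((hessPhi U B ε route x α).mulVec u - (hessPhi U B ε route x α').mulVec u) ≤
      Lu * (⨆ i : Fin n, |u i|) * euclNorm (α - α') := by
  have hu : ∀ i, |u i| ≤ ⨆ j, |u j| := le_ciSup (Finite.bddAbove_range _)
  have hu_nonneg : 0 ≤ ⨆ j, |u j| := Real.iSup_nonneg fun j => abs_nonneg (u j)
  rw [← Matrix.sub_mulVec, hessPhi_sub_hessPhi]
  refine euclNorm_le_mul_of_abs_le (mul_nonneg hLu hu_nonneg) fun i => ?_
  rw [Matrix.mulVec_diagonal, abs_mul, Pi.sub_apply]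
  calc |d2U (U i) (x i) (α i) - d2U (U i) (x i) (α' i)| * |u i|
      ≤ Lu * |α i - α' i| * ⨆ j, |u j| :=
        mul_le_mul (hUxx_lipa i (x i) (hx i) (α i) (α' i)) (hu i) (abs_nonneg _) (by positivity)
    _ = Lu * (⨆ j, |u j|) * |α i - α' i| := by ring

/-- **Proposition 3, Hessian Lipschitzness in `α`.** Under Assumption 2, for all
`x ∈ 𝓧`, `α, α' ∈ 𝓐` and every vector `u`,
`‖∇²_xΦ(x;α)u − ∇²_xΦ(x;α')u‖ ≤ L_u · max_i|u_i| · ‖α − α'‖`. -/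
theorem stmt4 (n m : ℕ) (hn : 0 < n) (route : Fin n → Finset (Fin m))
    (U : Fin n → ℝ → ℝ → ℝ) (B : Fin m → ℝ → ℝ)
    (ε μ δ b Lu Lb : ℝ) (hε : 0 < ε) (hμ : 0 < μ) (hδ : 0 < δ) (hδb : δ < b)
    (hLu : 0 ≤ Lu) (hLb : 0 ≤ Lb)
    (A : Set (Fin n → ℝ))
    -- Assumption 2
    (hUconc : ∀ a ∈ A, ∀ r, ConcaveOn ℝ (Set.Ioo (δ / 2) (2 * b)) (fun x => U r x (a r)))
    (hBsc : ∀ l, StrongConvexOn Set.univ μ (B l))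
    (hUx_lipx : ∀ r (a : ℝ), ∀ x ∈ Set.Ioo (δ / 2) (2 * b), ∀ y ∈ Set.Ioo (δ / 2) (2 * b),
      |dU (U r) x a - dU (U r) y a| ≤ Lu * |x - y|)
    (hUx_lipa : ∀ r, ∀ x ∈ Set.Ioo (δ / 2) (2 * b), ∀ a a' : ℝ,
      |dU (U r) x a - dU (U r) x a'| ≤ Lu * |a - a'|)
    (hUxx_lipx : ∀ r (a : ℝ), ∀ x ∈ Set.Ioo (δ / 2) (2 * b), ∀ y ∈ Set.Ioo (δ / 2) (2 * b),
      |d2U (U r) x a - d2U (U r) y a| ≤ Lu * |x - y|)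
    (hUxx_lipa : ∀ r, ∀ x ∈ Set.Ioo (δ / 2) (2 * b), ∀ a a' : ℝ,
      |d2U (U r) x a - d2U (U r) x a'| ≤ Lu * |a - a'|)
    (hUax_lipx : ∀ r (a : ℝ), ∀ x ∈ Set.Ioo (δ / 2) (2 * b), ∀ y ∈ Set.Ioo (δ / 2) (2 * b),
      |dadU (U r) x a - dadU (U r) y a| ≤ Lu * |x - y|)
    (hUax_lipa : ∀ r, ∀ x ∈ Set.Ioo (δ / 2) (2 * b), ∀ a a' : ℝ,
      |dadU (U r) x a - dadU (U r) x a'| ≤ Lu * |a - a'|)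
    (hBd_lip : ∀ l (x y : ℝ), |deriv (B l) x - deriv (B l) y| ≤ Lb * |x - y|)
    (hBdd_lip : ∀ l (x y : ℝ), |deriv (deriv (B l)) x - deriv (deriv (B l)) y| ≤ Lb * |x - y|)
    -- the points
    (x : Fin n → ℝ) (hx : ∀ r, x r ∈ Set.Ioo (δ / 2) (2 * b))
    (α α' : Fin n → ℝ) (hαA : α ∈ A) (hα'A : α' ∈ A)
    (u : Fin n → ℝ) :
    euclNorm ((hessPhi U B ε route x α).mulVec u - (hessPhi U B ε route x α').mulVec u) ≤
      Lu * (⨆ i : Fin n, |u i|) * euclNorm (α - α') :=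
  stmt4_general n m route U B ε δ b Lu hLu hUxx_lipa x hx α α' u
end
end

section
/- Fix P > 0, n ≥ 2, true parameters α̃_1,…,α̃_n > 0 with α̃_r ≠ 1 for all r, a bound b > 0, and the set 𝓐 = {α ∈ ℝⁿ : 0 < α_r ≤ b, r=1,…,n} where additionally α_r ≠ 1 for all r. For α ∈ 𝓐 let x*(α) be a maximizer of Σ_{r=1}^n x_r^{1−α_r}/(1−α_r) over the single-link feasible set F = {x ∈ ℝⁿ : x_r > 0 ∀r, Σ_{r=1}^n x_r ≤ P}. Define Ψ(α) = Σ_{r=1}^n x*_r(α)^{1−α̃_r}/(1−α̃_r). If α* ∈ argmax_{α∈𝓐} Ψ(α), then x*(α*) maximizes the true objective Σ_{r=1}^n x_r^{1−α̃_r}/(1−α̃_r) over F. -/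
/-!
The true optimum `x̄` on the link is the saturating point with equal marginal utilities
`x̄ r ^ (-α̃ r) = μ`, i.e. `x̄ r = s ^ (1 / α̃ r)` with `s` chosen by the intermediate value
theorem; by the strict tangent-line inequality for `x ↦ x ^ p / p` it is the unique maximizer.
For every `t > 0` the scaled parameters `t α̃` also have equal marginals at `x̄`, namely
`s ^ (-t)`, so for `t` small enough that `t α̃ ∈ 𝓐` the surrogate optimum `x*(t α̃)` is `x̄`.
Hence the true objective at `x*(α*)`, which is `Ψ(α*) ≥ Ψ(t α̃)`, attains the true optimum.
-/

open Real Finset Filter Topology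

theorem rpow_sub_one_div_lt_sub_one {p t : ℝ} (hp : p < 1) (hp0 : p ≠ 0) (ht : 0 < t)
    (ht1 : t ≠ 1) : (t ^ p - 1) / p < t - 1 := by
  rcases hp0.lt_or_gt with hneg | hpos
  · -- `t ^ p = exp (p log t) ≥ 1 + p log t`, and `p log t > p (t - 1)` since `p < 0`
    rw [div_lt_iff_of_neg hneg]
    have hexp : p * log t + 1 ≤ t ^ p := by
      rw [rpow_def_of_pos ht, mul_comm p]
      exact add_one_le_exp _
    nlinarith [log_lt_sub_one_of_pos ht ht1]
  · rw [div_lt_iff₀ hpos]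
    have := rpow_one_add_lt_one_add_mul_self (s := t - 1) (by linarith) (sub_ne_zero.2 ht1) hpos hp
    rw [add_sub_cancel] at this
    linarith

theorem rpow_div_lt_add_tangent {p x y : ℝ} (hp : p < 1) (hp0 : p ≠ 0) (hx : 0 < x)
    (hy : 0 < y) (hxy : x ≠ y) : x ^ p / p < y ^ p / p + y ^ (p - 1) * (x - y) := by
  have key := rpow_sub_one_div_lt_sub_one hp hp0 (div_pos hx hy)
    (by rwa [ne_eq, div_eq_one_iff_eq hy.ne'])
  have hyp : 0 < y ^ p := rpow_pos_of_pos hy p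
  have hx_eq : x ^ p = (x / y) ^ p * y ^ p := by
    rw [← mul_rpow (div_pos hx hy).le hy.le, div_mul_cancel₀ _ hy.ne']
  have hslope : y ^ (p - 1) * (x - y) = (x / y - 1) * y ^ p := by
    rw [rpow_sub_one hy.ne']
    field_simp
  rw [hx_eq, hslope]
  calc (x / y) ^ p * y ^ p / p = y ^ p / p + ((x / y) ^ p - 1) / p * y ^ p := by ring
    _ < y ^ p / p + (x / y - 1) * y ^ p := by gcongr

theorem rpow_inv_rpow_neg_mul {s a : ℝ} (hs : 0 ≤ s) (ha : a ≠ 0) (t : ℝ) :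
    (s ^ a⁻¹) ^ (-(t * a)) = s ^ (-t) := by
  rw [← rpow_mul hs]
  congr 1
  field_simp

theorem exists_pos_forall_mul_lt {ι : Type*} [Finite ι] (a : ι → ℝ) {c : ℝ} (hc : 0 < c) :
    ∃ t, 0 < t ∧ ∀ r, t * a r < c := by
  have hsmall : ∀ᶠ t in 𝓝[>] (0 : ℝ), ∀ r, t * a r < c := by
    refine eventually_all.2 fun r => ?_
    have : Tendsto (fun t => t * a r) (𝓝[>] 0) (𝓝 0) :=
      ((continuous_mul_const (a r)).tendsto' 0 0 (zero_mul _)).mono_left nhdsWithin_le_nhds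
    exact this.eventually (gt_mem_nhds hc)
  exact (hsmall.and self_mem_nhdsWithin).exists.imp fun t ht => ⟨ht.2, ht.1⟩

section SingleLink

variable {ι : Type*} [Fintype ι]

noncomputable def fairUtility (β x : ι → ℝ) : ℝ := ∑ r, x r ^ (1 - β r) / (1 - β r)

def singleLinkFeasible (P : ℝ) : Set (ι → ℝ) := {x | (∀ r, 0 < x r) ∧ ∑ r, x r ≤ P}

variable {β x y : ι → ℝ} {P μ : ℝ}

theorem fairUtility_lt_of_marginal_eq (hβ : ∀ r, 0 < β r) (hβ1 : ∀ r, β r ≠ 1)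
    (hy : ∀ r, 0 < y r) (hysum : ∑ r, y r = P) (hμ : 0 ≤ μ)
    (hmarg : ∀ r, y r ^ (-β r) = μ) (hx : x ∈ singleLinkFeasible P) (hxy : x ≠ y) :
    fairUtility β x < fairUtility β y := by
  obtain ⟨r₀, hr₀⟩ := Function.ne_iff.1 hxy
  have htangent (r : ι) (h : x r ≠ y r) :
      x r ^ (1 - β r) / (1 - β r) < y r ^ (1 - β r) / (1 - β r) + μ * (x r - y r) := by
    have := rpow_div_lt_add_tangent (by linarith [hβ r]) (sub_ne_zero.2 (hβ1 r).symm)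
      (hx.1 r) (hy r) h
    rwa [sub_sub_cancel_left, hmarg] at this
  calc fairUtility β x
      < ∑ r, (y r ^ (1 - β r) / (1 - β r) + μ * (x r - y r)) := by
        refine sum_lt_sum (fun r _ => ?_) ⟨r₀, mem_univ _, htangent r₀ hr₀⟩
        by_cases h : x r = y r
        · simp [h]
        · exact (htangent r h).le
    _ = fairUtility β y + μ * (∑ r, x r - P) := by
        rw [sum_add_distrib, ← mul_sum, sum_sub_distrib, hysum, fairUtility]
    _ ≤ fairUtility β y := by
        linarith [mul_nonpos_of_nonneg_of_nonpos hμ (sub_nonpos.2 hx.2)]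

theorem isMaxOn_fairUtility_of_marginal_eq (hβ : ∀ r, 0 < β r) (hβ1 : ∀ r, β r ≠ 1)
    (hy : ∀ r, 0 < y r) (hysum : ∑ r, y r = P) (hμ : 0 ≤ μ)
    (hmarg : ∀ r, y r ^ (-β r) = μ) : IsMaxOn (fairUtility β) (singleLinkFeasible P) y := by
  intro x hx
  rcases eq_or_ne x y with rfl | hxy
  · exact le_refl (fairUtility β x)
  · exact (fairUtility_lt_of_marginal_eq hβ hβ1 hy hysum hμ hmarg hx hxy).le

theorem eq_of_isMaxOn_fairUtility_of_marginal_eq (hβ : ∀ r, 0 < β r) (hβ1 : ∀ r, β r ≠ 1)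
    (hy : ∀ r, 0 < y r) (hysum : ∑ r, y r = P) (hμ : 0 ≤ μ)
    (hmarg : ∀ r, y r ^ (-β r) = μ) (hx : x ∈ singleLinkFeasible P)
    (hmax : IsMaxOn (fairUtility β) (singleLinkFeasible P) x) : x = y := by
  by_contra hxy
  exact (hmax ⟨hy, hysum.le⟩).not_gt
    (fairUtility_lt_of_marginal_eq hβ hβ1 hy hysum hμ hmarg hx hxy)

theorem exists_pos_sum_rpow_eq [Nonempty ι] {γ : ι → ℝ} (hγ : ∀ r, 0 < γ r) (hP : 0 < P) :
    ∃ s, 0 < s ∧ ∑ r, s ^ γ r = P := by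
  obtain ⟨r₀⟩ := ‹Nonempty ι›
  set M := P ^ (γ r₀)⁻¹
  have hM : 0 ≤ M := rpow_nonneg hP.le _
  have hcont : ContinuousOn (fun s : ℝ => ∑ r, s ^ γ r) (Set.Icc 0 M) :=
    continuousOn_finsetSum _ fun r _ => (continuous_rpow_const (hγ r).le).continuousOn
  have hzero : ∑ r, (0 : ℝ) ^ γ r = 0 := sum_eq_zero fun r _ => zero_rpow (hγ r).ne'
  have hM_ge : P ≤ ∑ r, M ^ γ r := by
    calc P = M ^ γ r₀ := by rw [← rpow_mul hP.le, inv_mul_cancel₀ (hγ r₀).ne', rpow_one]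
      _ ≤ ∑ r, M ^ γ r := single_le_sum (f := fun r => M ^ γ r)
          (fun r _ => rpow_nonneg hM _) (mem_univ r₀)
  obtain ⟨s, hs, hsP⟩ := intermediate_value_Icc hM hcont ⟨by rw [hzero]; exact hP.le, hM_ge⟩
  refine ⟨s, hs.1.lt_of_ne ?_, hsP⟩
  rintro rfl
  exact hP.ne' (hzero ▸ hsP.symm)

end SingleLink

theorem stmt11_general (n : ℕ) (hn : 2 ≤ n) (P b : ℝ) (hP : 0 < P) (hb : 0 < b)
    (αt : Fin n → ℝ) (hαt : ∀ r, 0 < αt r) (hαt1 : ∀ r, αt r ≠ 1)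
    (A : Set (Fin n → ℝ))
    (hA : A = {α : Fin n → ℝ | ∀ r, (0 < α r ∧ α r ≤ b) ∧ α r ≠ 1})
    (F : Set (Fin n → ℝ))
    (hF : F = {x : Fin n → ℝ | (∀ r, 0 < x r) ∧ ∑ r, x r ≤ P})
    (xstar : (Fin n → ℝ) → (Fin n → ℝ))
    (hxstar : ∀ α ∈ A, xstar α ∈ F ∧
      IsMaxOn (fun x : Fin n → ℝ => ∑ r, (x r) ^ (1 - α r) / (1 - α r)) F (xstar α))
    (Psi : (Fin n → ℝ) → ℝ)
    (hPsi : Psi = fun α => ∑ r, (xstar α r) ^ (1 - αt r) / (1 - αt r))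
    (αst : Fin n → ℝ) (hαst : IsMaxOn Psi A αst) :
    IsMaxOn (fun x : Fin n → ℝ => ∑ r, (x r) ^ (1 - αt r) / (1 - αt r)) F (xstar αst) := by
  subst hA hF hPsi
  have : Nonempty (Fin n) := ⟨⟨0, by omega⟩⟩
  obtain ⟨s, hs, hsum⟩ := exists_pos_sum_rpow_eq (fun r => inv_pos.2 (hαt r)) hP
  set xb : Fin n → ℝ := fun r => s ^ (αt r)⁻¹
  have hxb (r : Fin n) : 0 < xb r := rpow_pos_of_pos hs _
  have hmarg (t : ℝ) (r : Fin n) : xb r ^ (-(t * αt r)) = s ^ (-t) :=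
    rpow_inv_rpow_neg_mul hs.le (hαt r).ne' t
  obtain ⟨t, ht, htα⟩ := exists_pos_forall_mul_lt αt (lt_min one_pos hb)
  have hα' : (fun r => t * αt r) ∈ {α : Fin n → ℝ | ∀ r, (0 < α r ∧ α r ≤ b) ∧ α r ≠ 1} :=
    fun r => ⟨⟨mul_pos ht (hαt r), (htα r).le.trans (min_le_right _ _)⟩,
      ((htα r).trans_le (min_le_left _ _)).ne⟩
  obtain ⟨hfeas, hmax⟩ := hxstar _ hα'
  have hx_eq : xstar (fun r => t * αt r) = xb :=
    eq_of_isMaxOn_fairUtility_of_marginal_eq (fun r => (hα' r).1.1) (fun r => (hα' r).2) hxb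
      hsum (rpow_nonneg hs.le _) (hmarg t) hfeas hmax
  have hxb_max : IsMaxOn (fairUtility αt) (singleLinkFeasible P) xb :=
    isMaxOn_fairUtility_of_marginal_eq hαt hαt1 hxb hsum (rpow_nonneg hs.le _)
      (by simpa using hmarg 1)
  intro x hx
  calc fairUtility αt x ≤ fairUtility αt xb := hxb_max hx
    _ ≤ _ := hx_eq ▸ hαst hα'

/-- **Theorem 2, single-link validation.** If `α*` maximizes the bilevel upper
objective `Ψ(α) = ∑ r, x*_r(α)^{1-α̃_r}/(1-α̃_r)` over `𝓐`, where `x*(α)` maximizes the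
surrogate α-fair objective over the single-link feasible set `F`, then the resources `x*(α*)`
maximize the true α-fair objective over `F`. -/
theorem stmt11 (n : ℕ) (hn : 2 ≤ n) (P b : ℝ) (hP : 0 < P) (hb : 0 < b)
    (αt : Fin n → ℝ) (hαt : ∀ r, 0 < αt r) (hαt1 : ∀ r, αt r ≠ 1)
    (A : Set (Fin n → ℝ))
    (hA : A = {α : Fin n → ℝ | ∀ r, (0 < α r ∧ α r ≤ b) ∧ α r ≠ 1})
    (F : Set (Fin n → ℝ))
    (hF : F = {x : Fin n → ℝ | (∀ r, 0 < x r) ∧ ∑ r, x r ≤ P})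
    (xstar : (Fin n → ℝ) → (Fin n → ℝ))
    (hxstar : ∀ α ∈ A, xstar α ∈ F ∧
      IsMaxOn (fun x : Fin n → ℝ => ∑ r, (x r) ^ (1 - α r) / (1 - α r)) F (xstar α))
    (Psi : (Fin n → ℝ) → ℝ)
    (hPsi : Psi = fun α => ∑ r, (xstar α r) ^ (1 - αt r) / (1 - αt r))
    (αst : Fin n → ℝ) (hαstA : αst ∈ A) (hαst : IsMaxOn Psi A αst) :
    IsMaxOn (fun x : Fin n → ℝ => ∑ r, (x r) ^ (1 - αt r) / (1 - αt r)) F (xstar αst) :=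
  stmt11_general n hn P b hP hb αt hαt hαt1 A hA F hF xstar hxstar Psi hPsi αst hαst
end

section
/- Fix P > 0, n ≥ 1, and an index i. Let Ω ⊆ {α ∈ ℝⁿ : α_t > 0 ∀t} be open and let x_i : Ω → (0,∞) be differentiable and satisfy, for all α ∈ Ω, Σ_{t=1}^n x_i(α)^{α_i/α_t} = P. Then for every α ∈ Ω and every j ≠ i: ∂x_i/∂α_j (α) = (x_i(α)^{α_i/α_j} · (α_i/α_j²) · ln x_i(α)) / (Σ_{t=1}^n (α_i/α_t) · x_i(α)^{α_i/α_t − 1}). -/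
/-!
Along `Ω` the map `β ↦ ∑ t, x_i(β) ^ (β_i / β_t)` is constantly `P`, so its derivative at `α`
vanishes. Differentiating each power by `(f ^ a)' = a f ^ (a - 1) f' + f ^ a log f a'` and
evaluating in the direction `e_j` (with `j ≠ i`, only the exponent `β_i / β_j` moves) gives a
linear equation for `∂x_i/∂α_j` whose coefficient is the (positive) denominator of the formula.
-/

open Filter Topology

theorem HasFDerivAt.sum_rpow_eq_zero_of_eventuallyEq_const {E ι : Type*}
    [NormedAddCommGroup E] [NormedSpace ℝ E] [Fintype ι] {f : E → ℝ} {a : ι → E → ℝ}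
    {f' : E →L[ℝ] ℝ} {a' : ι → E →L[ℝ] ℝ} {x : E} {c : ℝ}
    (hf : HasFDerivAt f f' x) (ha : ∀ t, HasFDerivAt (a t) (a' t) x) (hfx : 0 < f x)
    (hconst : (fun y => ∑ t, f y ^ a t y) =ᶠ[𝓝 x] fun _ => c) (v : E) :
    (∑ t, a t x * f x ^ (a t x - 1)) * f' v + ∑ t, f x ^ a t x * Real.log (f x) * a' t v = 0 := by
  have hsum := HasFDerivAt.fun_sum (u := Finset.univ) fun t _ => hf.rpow (ha t) hfx
  have hzero := congrArg (· v) (hsum.unique ((hasFDerivAt_const c x).congr_of_eventuallyEq hconst))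
  simp only [add_apply, sum_apply, smul_apply, smul_eq_mul, zero_apply,
    Finset.sum_add_distrib] at hzero
  rw [Finset.sum_mul]
  exact hzero

theorem hasFDerivAt_apply_div_apply {ι : Type*} [Fintype ι] (α : ι → ℝ) (i t : ι)
    (ht : α t ≠ 0) :
    HasFDerivAt (fun β : ι → ℝ => β i / β t)
      ((α t)⁻¹ • ContinuousLinearMap.proj (R := ℝ) (φ := fun _ : ι => ℝ) i
        - (α i / α t ^ 2) • ContinuousLinearMap.proj t) α := by
  have hinv := (hasDerivAt_inv ht).comp_hasFDerivAt α
    (ContinuousLinearMap.proj (R := ℝ) (φ := fun _ : ι => ℝ) t).hasFDerivAt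
  have hquot := (ContinuousLinearMap.proj (R := ℝ) (φ := fun _ : ι => ℝ) i).hasFDerivAt.mul hinv
  refine (hquot.congr_fderiv ?_).congr_of_eventuallyEq (.of_forall fun β => div_eq_mul_inv _ _)
  ext v
  simp only [ContinuousLinearMap.proj_apply, neg_smul, smul_neg, Function.comp_apply, add_apply,
    neg_apply, smul_apply, smul_eq_mul, sub_apply]
  ring

theorem stmt14_general (n : ℕ) (P : ℝ) (i : Fin n)
    (Ω : Set (Fin n → ℝ)) (hΩopen : IsOpen Ω) (hΩpos : ∀ α ∈ Ω, ∀ t, 0 < α t)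
    (xi : (Fin n → ℝ) → ℝ)
    (hdiff : ∀ α ∈ Ω, DifferentiableAt ℝ xi α)
    (hxi : ∀ α ∈ Ω, 0 < xi α)
    (heq : ∀ α ∈ Ω, ∑ t, (xi α) ^ (α i / α t) = P)
    (α : Fin n → ℝ) (hα : α ∈ Ω) (j : Fin n) (hj : j ≠ i) :
    fderiv ℝ xi α (Pi.single j 1) =
      ((xi α) ^ (α i / α j) * (α i / (α j) ^ 2) * Real.log (xi α)) /
        (∑ t, (α i / α t) * (xi α) ^ (α i / α t - 1)) := by
  have hαpos := hΩpos α hα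
  have key := (hdiff α hα).hasFDerivAt.sum_rpow_eq_zero_of_eventuallyEq_const
    (fun t => hasFDerivAt_apply_div_apply α i t (hαpos t).ne') (hxi α hα)
    (eventuallyEq_of_mem (hΩopen.mem_nhds hα) heq) (Pi.single j 1)
  simp only [sub_apply, smul_apply, ContinuousLinearMap.proj_apply, Pi.single_eq_of_ne hj.symm,
    smul_eq_mul, mul_zero, Pi.single_apply, mul_ite, mul_one, zero_sub, mul_neg,
    Finset.sum_neg_distrib, Finset.sum_ite_eq', Finset.mem_univ, ↓reduceIte] at key
  have hden : 0 < ∑ t, (α i / α t) * (xi α) ^ (α i / α t - 1) :=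
    Finset.sum_pos (fun t _ =>
      mul_pos (div_pos (hαpos i) (hαpos t)) (Real.rpow_pos_of_pos (hxi α hα) _)) ⟨i, Finset.mem_univ i⟩
  rw [eq_div_iff hden.ne']
  linear_combination key

/-- Implicit differentiation of `∑ t, x_i(α)^{α_i/α_t} = P` with respect to
`α_j` for `j ≠ i`: the partial derivative `∂x_i/∂α_j` is given by the stated formula. -/
theorem stmt14 (n : ℕ) (P : ℝ) (hP : 0 < P) (i : Fin n)
    (Ω : Set (Fin n → ℝ)) (hΩopen : IsOpen Ω) (hΩpos : ∀ α ∈ Ω, ∀ t, 0 < α t)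
    (xi : (Fin n → ℝ) → ℝ)
    (hdiff : ∀ α ∈ Ω, DifferentiableAt ℝ xi α)
    (hxi : ∀ α ∈ Ω, 0 < xi α)
    (heq : ∀ α ∈ Ω, ∑ t, (xi α) ^ (α i / α t) = P)
    (α : Fin n → ℝ) (hα : α ∈ Ω) (j : Fin n) (hj : j ≠ i) :
    fderiv ℝ xi α (Pi.single j 1) =
      ((xi α) ^ (α i / α j) * (α i / (α j) ^ 2) * Real.log (xi α)) /
        (∑ t, (α i / α t) * (xi α) ^ (α i / α t - 1)) :=
  stmt14_general n P i Ω hΩopen hΩpos xi hdiff hxi heq α hα j hj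
end

section
/- Fix P > 0, n ≥ 1, and an index i. Let Ω ⊆ {α ∈ ℝⁿ : α_t > 0 ∀t} be open and let x_i : Ω → (0,∞) be differentiable and satisfy, for all α ∈ Ω, Σ_{t=1}^n x_i(α)^{α_i/α_t} = P. Then for every α ∈ Ω: ∂x_i/∂α_i (α) = (−Σ_{t≠i} (1/α_t) · x_i(α)^{α_i/α_t} · ln x_i(α)) / (Σ_{t=1}^n (α_i/α_t) · x_i(α)^{α_i/α_t − 1}). -/
/-!
Differentiate the identity `∑ t, x_i(α)^{α_i/α_t} = P` along the line `s ↦ α + s • e_i`.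
Each summand contributes `∂x_i/∂α_i · (α_i/α_t) x_i^{α_i/α_t - 1}` through its base, and through
its exponent `(α + s e_i)_i / (α + s e_i)_t` it contributes `x_i^{α_i/α_t} log x_i / α_t`
when `t ≠ i` and nothing when `t = i`, where the exponent stays `1`. The total vanishes, and the
coefficient of `∂x_i/∂α_i` is a sum of positive terms, so it can be solved for.
-/

open Filter Topology Real

section Line

variable {ι : Type*} [Fintype ι] {x : (ι → ℝ) → ℝ} {L : (ι → ℝ) →L[ℝ] ℝ} {α v : ι → ℝ}

lemma hasDerivAt_line (α v : ι → ℝ) : HasDerivAt (fun s : ℝ => α + s • v) v 0 := by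
  simpa using ((hasDerivAt_id (0 : ℝ)).smul_const v).const_add α

lemma hasDerivAt_comp_line (hx : HasFDerivAt x L α) :
    HasDerivAt (fun s : ℝ => x (α + s • v)) (L v) 0 := by
  have hx' : HasFDerivAt x L (α + (0 : ℝ) • v) := by simpa using hx
  exact hx'.comp_hasDerivAt 0 (hasDerivAt_line α v)

lemma hasDerivAt_line_apply_div_apply (i t : ι) (ht : α t ≠ 0) :
    HasDerivAt (fun s : ℝ => (α + s • v) i / (α + s • v) t)
      ((v i * α t - α i * v t) / α t ^ 2) 0 := by
  have hcoord : ∀ j, HasDerivAt (fun s : ℝ => (α + s • v) j) (v j) 0 := fun j =>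
    hasDerivAt_pi.mp (hasDerivAt_line α v) j
  simpa using (hcoord i).fun_div (hcoord t) (by simpa using ht)

lemma hasDerivAt_rpow_apply_div_apply_comp_line (hx : HasFDerivAt x L α) (hpos : 0 < x α)
    (i t : ι) (ht : α t ≠ 0) :
    HasDerivAt (fun s : ℝ => x (α + s • v) ^ ((α + s • v) i / (α + s • v) t))
      (L v * (α i / α t * x α ^ (α i / α t - 1)) +
        (v i * α t - α i * v t) / α t ^ 2 * x α ^ (α i / α t) * Real.log (x α)) 0 := by
  have hpos' : 0 < x (α + (0 : ℝ) • v) := by simpa using hpos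
  simpa [mul_assoc] using
    (hasDerivAt_comp_line hx).rpow (hasDerivAt_line_apply_div_apply i t ht) hpos'

theorem sum_deriv_rpow_apply_div_apply_line_eq_zero_of_eventuallyEq (hx : HasFDerivAt x L α)
    (hpos : 0 < x α) (hα : ∀ t, α t ≠ 0) (i : ι) {P : ℝ}
    (hconst : (fun β => ∑ t, x β ^ (β i / β t)) =ᶠ[𝓝 α] fun _ => P) :
    ∑ t, (L v * (α i / α t * x α ^ (α i / α t - 1)) +
        (v i * α t - α i * v t) / α t ^ 2 * x α ^ (α i / α t) * Real.log (x α)) = 0 := by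
  have hsum := HasDerivAt.fun_sum (u := Finset.univ) fun t _ =>
    hasDerivAt_rpow_apply_div_apply_comp_line (v := v) hx hpos i t (hα t)
  have hline : Tendsto (fun s : ℝ => α + s • v) (𝓝 0) (𝓝 α) := by
    simpa using (hasDerivAt_line α v).continuousAt.tendsto
  exact hsum.unique ((hasDerivAt_const (0 : ℝ) P).congr_of_eventuallyEq
    (hconst.comp_tendsto hline))

end Line

lemma single_apply_mul_sub_mul_single_div_sq {ι : Type*} [DecidableEq ι] {α : ι → ℝ} {i t : ι}
    (ht : α t ≠ 0) :
    ((Pi.single i 1 : ι → ℝ) i * α t - α i * (Pi.single i 1 : ι → ℝ) t) / α t ^ 2 =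
      if t = i then 0 else 1 / α t := by
  split_ifs with hti
  · subst hti; simp
  · rw [Pi.single_eq_same, Pi.single_eq_of_ne hti]
    field_simp
    ring

theorem stmt15_general (n : ℕ) (P : ℝ) (i : Fin n)
    (Ω : Set (Fin n → ℝ)) (hΩopen : IsOpen Ω) (hΩpos : ∀ α ∈ Ω, ∀ t, 0 < α t)
    (xi : (Fin n → ℝ) → ℝ)
    (hdiff : ∀ α ∈ Ω, DifferentiableAt ℝ xi α)
    (hxi : ∀ α ∈ Ω, 0 < xi α)
    (heq : ∀ α ∈ Ω, ∑ t, (xi α) ^ (α i / α t) = P)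
    (α : Fin n → ℝ) (hα : α ∈ Ω) :
    fderiv ℝ xi α (Pi.single i 1) =
      (-(∑ t ∈ Finset.univ.erase i, (1 / α t) * (xi α) ^ (α i / α t) * Real.log (xi α))) /
        (∑ t, (α i / α t) * (xi α) ^ (α i / α t - 1)) := by
  have hαpos := hΩpos α hα
  have hxpos := hxi α hα
  have hconst : (fun β => ∑ t, xi β ^ (β i / β t)) =ᶠ[𝓝 α] fun _ => P :=
    eventually_of_mem (hΩopen.mem_nhds hα) heq
  have hkey := sum_deriv_rpow_apply_div_apply_line_eq_zero_of_eventuallyEq (v := Pi.single i 1)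
    (hdiff α hα).hasFDerivAt hxpos (fun t => (hαpos t).ne') i hconst
  simp only [single_apply_mul_sub_mul_single_div_sq (hαpos _).ne', ite_mul, zero_mul,
    Finset.sum_add_distrib, Finset.sum_ite, Finset.sum_const_zero, zero_add,
    Finset.filter_ne', ← Finset.mul_sum] at hkey
  have hden : 0 < ∑ t, α i / α t * xi α ^ (α i / α t - 1) :=
    Finset.sum_pos (fun t _ => mul_pos (div_pos (hαpos i) (hαpos t)) (rpow_pos_of_pos hxpos _))
      ⟨i, Finset.mem_univ i⟩
  rw [eq_div_iff hden.ne']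
  linarith

/-- Implicit differentiation of `∑ t, x_i(α)^{α_i/α_t} = P` with respect to
`α_i`: the partial derivative `∂x_i/∂α_i` is given by the stated formula. -/
theorem stmt15 (n : ℕ) (P : ℝ) (hP : 0 < P) (i : Fin n)
    (Ω : Set (Fin n → ℝ)) (hΩopen : IsOpen Ω) (hΩpos : ∀ α ∈ Ω, ∀ t, 0 < α t)
    (xi : (Fin n → ℝ) → ℝ)
    (hdiff : ∀ α ∈ Ω, DifferentiableAt ℝ xi α)
    (hxi : ∀ α ∈ Ω, 0 < xi α)
    (heq : ∀ α ∈ Ω, ∑ t, (xi α) ^ (α i / α t) = P)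
    (α : Fin n → ℝ) (hα : α ∈ Ω) :
    fderiv ℝ xi α (Pi.single i 1) =
      (-(∑ t ∈ Finset.univ.erase i, (1 / α t) * (xi α) ^ (α i / α t) * Real.log (xi α))) /
        (∑ t, (α i / α t) * (xi α) ^ (α i / α t - 1)) :=
  stmt15_general n P i Ω hΩopen hΩpos xi hdiff hxi heq α hα
end

section
/- Let α_1,…,α_n > 0 and x_1,…,x_n > 0 satisfy x_1^{−α_1} = ⋯ = x_n^{−α_n} (equivalently x_j^{α_j} = x_i^{α_i} for all i, j). Then for all indices i ≠ j: ((1/α_i)·x_j^{α_j/α_i}·ln x_j) / (Σ_{t=1}^n (α_j/α_t)·x_j^{α_j/α_t − 1}) = ((α_i/α_j²)·x_i^{α_i/α_j}·ln x_i) / (Σ_{t=1}^n (α_i/α_t)·x_i^{α_i/α_t − 1}). -/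
/-!
Write `c` for the common value of the `x_r ^ α_r`. Then `x_r ^ (α_r / α_t) = c ^ (1 / α_t)` does not
depend on `r`, so both denominators are the same sum `S = ∑ₜ c ^ (1 / α_t) / α_t`, scaled by
`α_j / x_j` and `α_i / x_i` respectively. The same observation gives `x_j ^ (α_j / α_i) = x_i`,
`x_i ^ (α_i / α_j) = x_j` and `α_i log x_i = α_j log x_j`, after which the identity is a
rearrangement.
-/

namespace Real

theorem rpow_div_eq_of_rpow_eq {x y a b : ℝ} (hx : 0 ≤ x) (hy : 0 ≤ y) (hb : b ≠ 0)
    (h : x ^ a = y ^ b) : x ^ (a / b) = y := by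
  rw [div_eq_mul_inv, rpow_mul hx, h, rpow_rpow_inv hy hb]

theorem mul_log_eq_of_rpow_eq {x y a b : ℝ} (hx : 0 < x) (hy : 0 < y) (h : x ^ a = y ^ b) :
    a * log x = b * log y := by
  simpa only [log_rpow hx, log_rpow hy] using congrArg log h

theorem sum_mul_rpow_div_sub_one {ι : Type*} [Fintype ι] (α : ι → ℝ) {x : ℝ} (hx : 0 < x)
    (a : ℝ) :
    ∑ t, a / α t * x ^ (a / α t - 1) = a / x * ∑ t, (x ^ a) ^ (α t)⁻¹ / α t := by
  rw [Finset.mul_sum]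
  refine Finset.sum_congr rfl fun t _ => ?_
  rw [rpow_sub hx, rpow_one, ← rpow_mul hx.le, ← div_eq_mul_inv]
  ring

end Real

theorem stmt16_general (n : ℕ) (α x : Fin n → ℝ) (hα : ∀ r, 0 < α r) (hx : ∀ r, 0 < x r)
    (heq : ∀ i j, (x i) ^ (α i) = (x j) ^ (α j))
    (i j : Fin n) :
    ((1 / α i) * (x j) ^ (α j / α i) * Real.log (x j)) /
        (∑ t, (α j / α t) * (x j) ^ (α j / α t - 1))
      = ((α i / (α j) ^ 2) * (x i) ^ (α i / α j) * Real.log (x i)) /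
        (∑ t, (α i / α t) * (x i) ^ (α i / α t - 1)) := by
  rw [Real.sum_mul_rpow_div_sub_one α (hx j), Real.sum_mul_rpow_div_sub_one α (hx i), heq j i,
    Real.rpow_div_eq_of_rpow_eq (hx j).le (hx i).le (hα i).ne' (heq j i),
    Real.rpow_div_eq_of_rpow_eq (hx i).le (hx j).le (hα j).ne' (heq i j)]
  have hS : (∑ t, (x i ^ α i) ^ (α t)⁻¹ / α t) ≠ 0 :=
    (Finset.sum_pos (fun t _ => div_pos (Real.rpow_pos_of_pos (Real.rpow_pos_of_pos (hx i) _) _)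
      (hα t)) ⟨i, Finset.mem_univ i⟩).ne'
  have hlog := Real.mul_log_eq_of_rpow_eq (hx i) (hx j) (heq i j)
  generalize (∑ t, (x i ^ α i) ^ (α t)⁻¹ / α t) = S at hS ⊢
  field_simp [(hα i).ne', (hα j).ne', (hx i).ne', (hx j).ne']
  linear_combination -hlog

/-- Algebraic identity relating the implicit-differentiation expressions of
distinct users when `x_1^{-α_1} = ⋯ = x_n^{-α_n}` (equivalently `x_i^{α_i} = x_j^{α_j}`). -/
theorem stmt16 (n : ℕ) (α x : Fin n → ℝ) (hα : ∀ r, 0 < α r) (hx : ∀ r, 0 < x r)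
    (heq : ∀ i j, (x i) ^ (α i) = (x j) ^ (α j))
    (i j : Fin n) (hij : i ≠ j) :
    ((1 / α i) * (x j) ^ (α j / α i) * Real.log (x j)) /
        (∑ t, (α j / α t) * (x j) ^ (α j / α t - 1))
      = ((α i / (α j) ^ 2) * (x i) ^ (α i / α j) * Real.log (x i)) /
        (∑ t, (α i / α t) * (x i) ^ (α i / α t - 1)) :=
  stmt16_general n α x hα hx heq i j
end

section
/- Fix P > 0, n ≥ 1, true parameters α̃_1,…,α̃_n > 0 with α̃_r ≠ 1, and an open set Ω ⊆ {α ∈ ℝⁿ : α_t > 0 ∀t}. Let x_1,…,x_n : Ω → (0,∞) be differentiable and satisfy, for all α ∈ Ω and all i: Σ_{t=1}^n x_i(α)^{α_i/α_t} = P and x_i(α)^{−α_i} = x_j(α)^{−α_j} for all j. Define Ψ(α) = Σ_{i=1}^n x_i(α)^{1−α̃_i}/(1−α̃_i). Then for every α ∈ Ω and every j: ∂Ψ/∂α_j (α) = (1/α_j)·ln x_j(α)·Σ_{i≠j} (x_i(α)^{−α̃_i} − x_j(α)^{−α̃_j}) · x_i(α)^{α_i/α_j} / (Σ_{t=1}^n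 (α_i/α_t)·x_i(α)^{α_i/α_t − 1}). -/
/-!
On `Ω` the lower-level conditions say that `α_i log x_i(α)` is the same number `λ(α)` for
every `i` and that `∑_t x_t(α) = P`. Differentiating both identities along `e_j` expresses every
`∂_j x_i` through `μ = ∂_j λ`, and the linear constraint `∑_t ∂_j x_t = 0` pins down
`μ = x_j log x_j / (α_j T)` with `T = ∑_t x_t / α_t`. The same constraint lets one subtract `x_j^{-α̃_j} ∑_t ∂_j x_t` from
`∂_j Ψ = ∑_i x_i^{-α̃_i} ∂_j x_i`, which kills the `i = j` term and leaves the stated sum.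
-/

open Real Filter Topology

theorem Finset.sum_mul_eq_sum_erase_sub_mul {ι R : Type*} [CommRing R] [DecidableEq ι]
    {s : Finset ι} (j : ι) (w d : ι → R) (hd : ∑ i ∈ s, d i = 0) :
    ∑ i ∈ s, w i * d i = ∑ i ∈ s.erase j, (w i - w j) * d i := by
  rw [Finset.sum_erase s (by rw [sub_self, zero_mul])]
  simp only [sub_mul, Finset.sum_sub_distrib, ← Finset.mul_sum, hd, mul_zero, sub_zero]

theorem Real.rpow_div_eq_of_mul_log_eq {x y a b : ℝ} (hx : 0 < x) (hy : 0 < y) (hb : b ≠ 0)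
    (h : a * log x = b * log y) : x ^ (a / b) = y := by
  rw [rpow_def_of_pos hx, mul_div_assoc', mul_comm, h, mul_div_cancel_left₀ _ hb, exp_log hy]

theorem HasFDerivAt.rpow_one_sub_div {E : Type*} [NormedAddCommGroup E] [NormedSpace ℝ E]
    {f : E → ℝ} {f' : E →L[ℝ] ℝ} {x : E} {c : ℝ} (hf : HasFDerivAt f f' x) (hfx : f x ≠ 0)
    (hc : c ≠ 1) : HasFDerivAt (fun y => f y ^ (1 - c) / (1 - c)) (f x ^ (-c) • f') x := by
  have : 1 - c ≠ 0 := sub_ne_zero.mpr hc.symm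
  have h := (hf.rpow_const (p := 1 - c) (Or.inl hfx)).mul_const (1 - c)⁻¹
  rw [smul_smul, ← mul_assoc, inv_mul_cancel₀ this, one_mul, sub_sub_cancel_left] at h
  simpa only [div_eq_mul_inv] using h

theorem fderiv_apply_mul_log_apply {ι : Type*} [Fintype ι] {f : (ι → ℝ) → ℝ} {α : ι → ℝ}
    (hf : DifferentiableAt ℝ f α) (hfα : f α ≠ 0) (i : ι) (v : ι → ℝ) :
    fderiv ℝ (fun a => a i * log (f a)) α v = v i * log (f α) + α i * (fderiv ℝ f α v / f α) := by
  rw [((hasFDerivAt_apply i α).fun_mul (hf.hasFDerivAt.log hfα)).fderiv]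
  simp only [add_apply, smul_apply, smul_eq_mul, ContinuousLinearMap.proj_apply]
  ring

section LowerLevel

variable {ι : Type*} [Fintype ι] {x : ι → (ι → ℝ) → ℝ} {α : ι → ℝ}

theorem sum_fderiv_apply_eq_zero_of_eventually_sum_eq
    (hdiff : ∀ i, DifferentiableAt ℝ (x i) α) {P : ℝ} (hsum : ∀ᶠ a in 𝓝 α, ∑ t, x t a = P)
    (v : ι → ℝ) : ∑ t, fderiv ℝ (x t) α v = 0 := by
  have h : fderiv ℝ (fun a => ∑ t, x t a) α = 0 := by
    rw [Filter.EventuallyEq.fderiv_eq (f := fun _ => P) hsum, fderiv_const_apply]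
  rw [fderiv_fun_sum fun t _ => hdiff t] at h
  simpa using congrArg (· v) h

theorem fderiv_rate_apply_single_of_ne [DecidableEq ι] (hdiff : ∀ i, DifferentiableAt ℝ (x i) α)
    (hpos : ∀ i, 0 < x i α) (hα : ∀ i, 0 < α i)
    (hlog : ∀ᶠ a in 𝓝 α, ∀ i k, a i * log (x i a) = a k * log (x k a)) {P : ℝ}
    (hsum : ∀ᶠ a in 𝓝 α, ∑ t, x t a = P) {i j : ι} (hij : i ≠ j) :
    fderiv ℝ (x i) α (Pi.single j 1) =
      x i α * x j α * log (x j α) / (α i * α j * ∑ t, x t α / α t) := by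
  set d : ι → ℝ := fun k => fderiv ℝ (x k) α (Pi.single j 1)
  set T := ∑ t, x t α / α t
  -- `μ` is the derivative along `e_j` of the common value of `a_k log x_k(a)`
  set μ := log (x j α) + α j * (d j / x j α)
  have hμ : ∀ k, α k * (d k / x k α) = μ - if k = j then log (x j α) else 0 := by
    intro k
    have h := congrArg (· (Pi.single j 1))
      (Filter.EventuallyEq.fderiv_eq (𝕜 := ℝ) (hlog.mono fun a ha => ha k j))
    simp only [fderiv_apply_mul_log_apply (hdiff _) (hpos _).ne', Pi.single_apply] at h
    split_ifs at h ⊢ with hk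
    · subst hk; ring
    · simp only [zero_mul, zero_add, one_mul, sub_zero] at h ⊢; exact h
  have hd : ∀ k, d k = x k α / α k * μ - if k = j then x j α / α j * log (x j α) else 0 := by
    intro k
    have h := hμ k
    have hxk := (hpos k).ne'
    have hαk := (hα k).ne'
    split_ifs at h ⊢ with hk
    · subst hk; field_simp at h ⊢; linear_combination h
    · field_simp at h ⊢; linear_combination h
  have hT : 0 < T := Finset.sum_pos (fun t _ => div_pos (hpos t) (hα t)) ⟨j, Finset.mem_univ j⟩
  have hsum0 := sum_fderiv_apply_eq_zero_of_eventually_sum_eq hdiff hsum (Pi.single j 1)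
  rw [Finset.sum_congr rfl fun k _ => hd k, Finset.sum_sub_distrib, ← Finset.sum_mul,
    Finset.sum_ite_eq', if_pos (Finset.mem_univ j)] at hsum0
  have hμT : μ = x j α / α j * log (x j α) / T := by
    rw [eq_div_iff hT.ne']
    linear_combination hsum0
  rw [show fderiv ℝ (x i) α (Pi.single j 1) = d i from rfl, hd i, if_neg hij, sub_zero, hμT]
  have hαi := (hα i).ne'
  have hαj := (hα j).ne'
  field_simp

end LowerLevel

theorem stmt17_general (n : ℕ) (P : ℝ)
    (αt : Fin n → ℝ) (hαt1 : ∀ r, αt r ≠ 1)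
    (Ω : Set (Fin n → ℝ)) (hΩopen : IsOpen Ω) (hΩpos : ∀ α ∈ Ω, ∀ t, 0 < α t)
    (x : Fin n → (Fin n → ℝ) → ℝ)
    (hdiff : ∀ i, ∀ α ∈ Ω, DifferentiableAt ℝ (x i) α)
    (hpos : ∀ i, ∀ α ∈ Ω, 0 < x i α)
    (hsum : ∀ i, ∀ α ∈ Ω, ∑ t, (x i α) ^ (α i / α t) = P)
    (hrel : ∀ α ∈ Ω, ∀ i j, (x i α) ^ (-(α i)) = (x j α) ^ (-(α j)))
    (α : Fin n → ℝ) (hα : α ∈ Ω) (j : Fin n) :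
    fderiv ℝ (fun a => ∑ i, (x i a) ^ (1 - αt i) / (1 - αt i)) α (Pi.single j 1) =
      (1 / α j) * Real.log (x j α) *
        ∑ i ∈ Finset.univ.erase j,
          ((x i α) ^ (-(αt i)) - (x j α) ^ (-(αt j))) * (x i α) ^ (α i / α j) /
            (∑ t, (α i / α t) * (x i α) ^ (α i / α t - 1)) := by
  have hlog : ∀ a ∈ Ω, ∀ i k, a i * log (x i a) = a k * log (x k a) := fun a ha i k => by
    simpa only [log_rpow (hpos _ a ha), neg_mul, neg_inj] using congrArg log (hrel a ha i k)
  have hpow : ∀ a ∈ Ω, ∀ i t, x i a ^ (a i / a t) = x t a := fun a ha i t =>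
    rpow_div_eq_of_mul_log_eq (hpos i a ha) (hpos t a ha) (hΩpos a ha t).ne' (hlog a ha i t)
  have hΩα : Ω ∈ 𝓝 α := hΩopen.mem_nhds hα
  have hrates : ∀ᶠ a in 𝓝 α, ∑ t, x t a = P :=
    eventually_of_mem hΩα fun a ha => by simpa only [hpow a ha j] using hsum j a ha
  have hΨ := HasFDerivAt.fun_sum (u := Finset.univ) fun i _ =>
    (hdiff i α hα).hasFDerivAt.rpow_one_sub_div (hpos i α hα).ne' (hαt1 i)
  rw [hΨ.fderiv]
  simp only [sum_apply, smul_apply, smul_eq_mul]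
  rw [Finset.sum_mul_eq_sum_erase_sub_mul j _ _
    (sum_fderiv_apply_eq_zero_of_eventually_sum_eq (fun i => hdiff i α hα) hrates _),
    Finset.mul_sum]
  refine Finset.sum_congr rfl fun i hi => ?_
  rw [fderiv_rate_apply_single_of_ne (fun i => hdiff i α hα) (fun i => hpos i α hα) (hΩpos α hα)
    (eventually_of_mem hΩα hlog) hrates (Finset.ne_of_mem_erase hi), hpow α hα i j]
  have hden : ∑ t, α i / α t * x i α ^ (α i / α t - 1) =
      (α i * ∑ t, x t α / α t) / x i α := by
    rw [mul_div_right_comm, Finset.mul_sum]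
    refine Finset.sum_congr rfl fun t _ => ?_
    rw [rpow_sub_one (hpos i α hα).ne', hpow α hα i t]
    ring
  rw [hden, div_div_eq_mul_div]
  ring

/-- Formula for the partial derivative `∂Ψ/∂α_j` of the upper-level objective
`Ψ(α) = ∑ i, x_i(α)^{1-α̃_i}/(1-α̃_i)` of the single-link α-fair bilevel problem, where the
lower-level rates satisfy `∑ t, x_i(α)^{α_i/α_t} = P` and `x_i(α)^{-α_i} = x_j(α)^{-α_j}`. -/
theorem stmt17 (n : ℕ) (P : ℝ) (hP : 0 < P)
    (αt : Fin n → ℝ) (hαt : ∀ r, 0 < αt r) (hαt1 : ∀ r, αt r ≠ 1)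
    (Ω : Set (Fin n → ℝ)) (hΩopen : IsOpen Ω) (hΩpos : ∀ α ∈ Ω, ∀ t, 0 < α t)
    (x : Fin n → (Fin n → ℝ) → ℝ)
    (hdiff : ∀ i, ∀ α ∈ Ω, DifferentiableAt ℝ (x i) α)
    (hpos : ∀ i, ∀ α ∈ Ω, 0 < x i α)
    (hsum : ∀ i, ∀ α ∈ Ω, ∑ t, (x i α) ^ (α i / α t) = P)
    (hrel : ∀ α ∈ Ω, ∀ i j, (x i α) ^ (-(α i)) = (x j α) ^ (-(α j)))
    (α : Fin n → ℝ) (hα : α ∈ Ω) (j : Fin n) :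
    fderiv ℝ (fun a => ∑ i, (x i a) ^ (1 - αt i) / (1 - αt i)) α (Pi.single j 1) =
      (1 / α j) * Real.log (x j α) *
        ∑ i ∈ Finset.univ.erase j,
          ((x i α) ^ (-(αt i)) - (x j α) ^ (-(αt j))) * (x i α) ^ (α i / α j) /
            (∑ t, (α i / α t) * (x i α) ^ (α i / α t - 1)) :=
  stmt17_general n P αt hαt1 Ω hΩopen hΩpos x hdiff hpos hsum hrel α hα j
end

section
/- Let Ũ : ℝ → ℝ be differentiable with L_u-Lipschitz continuous derivative, let δ > 0, x ∈ ℝ, and let u be a standard Gaussian random variable. Define the two-point gradient estimator ĝ_two(x;u) = ((Ũ(x + δu) − Ũ(x))/δ)·u. Then |E_u[ĝ_two(x;u)] − Ũ′(x)| ≤ 4·L_u·δ. -/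
/-!
Since `E[u²] = 1`, the bias equals `E[r(δu) · u / δ]`, where `r(h) = Ũ(x + h) - Ũ(x) - h Ũ'(x)`
is the first-order Taylor remainder. The Lipschitz bound on `Ũ'` gives `|r(h)| ≤ L h²`, so the
bias is at most `L δ E|u|³`, and for a standard Gaussian `E|u|³ = 4 / √(2π) ≤ 4`.
-/

open ProbabilityTheory
open MeasureTheory Real Set

theorem norm_sub_sub_smul_deriv_le {E : Type*} [NormedAddCommGroup E] [NormedSpace ℝ E]
    {f : ℝ → E} (hf : Differentiable ℝ f) {L x : ℝ}
    (hL : ∀ y, ‖deriv f y - deriv f x‖ ≤ L * |y - x|) (h : ℝ) :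
    ‖f (x + h) - f x - h • deriv f x‖ ≤ L * h ^ 2 := by
  have hL₀ : 0 ≤ L := by simpa using (norm_nonneg _).trans (hL (x + 1))
  have hderiv : ∀ y ∈ uIcc x (x + h), HasDerivWithinAt (fun y ↦ f y - (y - x) • deriv f x)
      (deriv f y - deriv f x) (uIcc x (x + h)) y := fun y _ ↦ by
    simpa using ((hf y).hasDerivAt.fun_sub
      (((hasDerivAt_id y).sub_const x).smul_const (deriv f x))).hasDerivWithinAt
  have hbound : ∀ y ∈ uIcc x (x + h), ‖deriv f y - deriv f x‖ ≤ L * |h| := fun y hy ↦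
    (hL y).trans (mul_le_mul_of_nonneg_left (by simpa using abs_sub_left_of_mem_uIcc hy) hL₀)
  have hmvt := (convex_uIcc x (x + h)).norm_image_sub_le_of_norm_hasDerivWithin_le hderiv hbound
    left_mem_uIcc right_mem_uIcc
  calc ‖f (x + h) - f x - h • deriv f x‖ ≤ L * |h| * ‖x + h - x‖ := by
        simpa [sub_right_comm] using hmvt
    _ = L * h ^ 2 := by rw [add_sub_cancel_left, norm_eq_abs, mul_assoc, ← sq, sq_abs]

theorem abs_integral_difference_quotient_mul_sub_deriv_le {μ : Measure ℝ} {f : ℝ → ℝ}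
    (hf : Differentiable ℝ f) {L x δ : ℝ} (hL : ∀ y, |deriv f y - deriv f x| ≤ L * |y - x|)
    (hδ : δ ≠ 0) (hμ₂ : ∫ u, u ^ 2 ∂μ = 1) (hi₂ : Integrable (fun u ↦ u ^ 2) μ)
    (hi₃ : Integrable (fun u ↦ |u| ^ 3) μ) :
    |∫ u, (f (x + δ * u) - f x) / δ * u ∂μ - deriv f x| ≤ L * |δ| * ∫ u, |u| ^ 3 ∂μ := by
  set r : ℝ → ℝ := fun u ↦ (f (x + δ * u) - f x - δ * u * deriv f x) / δ * u
  have hr_le : ∀ u, ‖r u‖ ≤ L * |δ| * |u| ^ 3 := fun u ↦ by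
    have htaylor := norm_sub_sub_smul_deriv_le hf hL (δ * u)
    simp only [norm_eq_abs, smul_eq_mul] at htaylor
    calc ‖r u‖ = |f (x + δ * u) - f x - δ * u * deriv f x| * |u| / |δ| := by
          simp only [r, norm_eq_abs, abs_mul, abs_div]; ring
      _ ≤ L * (δ * u) ^ 2 * |u| / |δ| := by gcongr
      _ = L * |δ| * |u| ^ 3 := by
          field_simp
          rw [← sq_abs δ, ← sq_abs u]; ring
  have hr : Integrable r μ :=
    (hi₃.const_mul (L * |δ|)).mono' (by have := hf.continuous; simp only [r]; fun_prop)
      (.of_forall hr_le)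
  have hsplit : ∫ u, (f (x + δ * u) - f x) / δ * u ∂μ = ∫ u, r u ∂μ + deriv f x := by
    have hpoint : ∀ u, (f (x + δ * u) - f x) / δ * u = r u + deriv f x * u ^ 2 := fun u ↦ by
      simp only [r]; field_simp; ring
    simp_rw [hpoint]
    rw [integral_add hr (hi₂.const_mul _), integral_const_mul, hμ₂, mul_one]
  rw [hsplit, add_sub_cancel_right, ← integral_const_mul, ← norm_eq_abs]
  exact norm_integral_le_of_norm_le (hi₃.const_mul _) (.of_forall hr_le)

theorem integral_sq_gaussianReal : ∫ u, u ^ 2 ∂gaussianReal 0 1 = 1 := by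
  simpa using (variance_of_integral_eq_zero (X := fun u : ℝ ↦ u) aemeasurable_id'
    (integral_id_gaussianReal (μ := 0) (v := 1))).symm

theorem integrable_abs_pow_gaussianReal (n : ℕ) :
    Integrable (fun u ↦ |u| ^ n) (gaussianReal 0 1) := by
  simpa using (memLp_id_gaussianReal (μ := 0) (v := 1) n).integrable_norm_pow'

theorem integral_pow_three_mul_exp_neg_half_sq_Ioi :
    ∫ x in Ioi (0 : ℝ), x ^ 3 * exp (-(1 / 2) * x ^ 2) = 2 := by
  have h := integral_rpow_mul_exp_neg_mul_rpow (p := 2) (q := 3) (b := 1 / 2) two_pos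
    (by norm_num) (by norm_num)
  norm_num [Real.Gamma_two] at h
  simpa only [neg_mul] using h

theorem integral_abs_pow_three_gaussianReal :
    ∫ u, |u| ^ 3 ∂gaussianReal 0 1 = 4 / √(2 * π) := by
  have hdensity : ∀ u : ℝ, gaussianPDFReal 0 1 u • |u| ^ 3
      = (√(2 * π))⁻¹ * (|u| ^ 3 * exp (-(1 / 2) * |u| ^ 2)) := fun u ↦ by
    simp only [gaussianPDFReal, NNReal.coe_one, mul_one, sub_zero, smul_eq_mul, sq_abs]
    rw [show -u ^ 2 / 2 = -(1 / 2) * u ^ 2 by ring]; ring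
  rw [integral_gaussianReal_eq_integral_smul one_ne_zero]
  simp_rw [hdensity]
  rw [integral_const_mul, integral_comp_abs (f := fun t ↦ t ^ 3 * exp (-(1 / 2) * t ^ 2)),
    integral_pow_three_mul_exp_neg_half_sq_Ioi]
  ring

/-- Bias bound for the two-point zeroth-order gradient estimator with Gaussian
smoothing: if `Ũ` is differentiable with `L_u`-Lipschitz derivative, then
`|E_u[((Ũ(x+δu) − Ũ(x))/δ)·u] − Ũ'(x)| ≤ 4 L_u δ` for `u ~ N(0,1)`. -/
theorem stmt19 (Ut : ℝ → ℝ) (Lu : ℝ) (hLu : 0 ≤ Lu)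
    (hdiff : Differentiable ℝ Ut)
    (hlip : ∀ x y : ℝ, |deriv Ut x - deriv Ut y| ≤ Lu * |x - y|)
    (δ : ℝ) (hδ : 0 < δ) (x : ℝ) :
    |(∫ u, ((Ut (x + δ * u) - Ut x) / δ) * u ∂(gaussianReal 0 1)) - deriv Ut x|
      ≤ 4 * Lu * δ := by
  have hbias := abs_integral_difference_quotient_mul_sub_deriv_le hdiff (fun y ↦ hlip y x)
    hδ.ne' integral_sq_gaussianReal (by simpa using integrable_abs_pow_gaussianReal 2)
    (integrable_abs_pow_gaussianReal 3)
  rw [abs_of_pos hδ, integral_abs_pow_three_gaussianReal] at hbias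
  have hmoment : 4 / √(2 * π) ≤ 4 :=
    div_le_self (by norm_num) (one_le_sqrt.2 (by nlinarith [pi_gt_three]))
  calc _ ≤ Lu * δ * (4 / √(2 * π)) := hbias
    _ ≤ Lu * δ * 4 := by gcongr
    _ = 4 * Lu * δ := by ring
end
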